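/- arXiv:0910.2875 — 3 statements merged into one kernel-verified Lean document; each statement's English description precedes it below -/
import Mathlib

section
/- Let (φ_{s,t}) be an evolution family in ℍ with common Denjoy–Wolff point ∞. Then exactly one of the following two alternatives holds: (i) for every w ∈ ℍ and every s ≥ 0, Re φ_{s,t}(w) → +∞ as t → +∞; (ii) for every s ≥ 0 there exists a holomorphic map θ_s : ℍ → ℍ such that the functions w ↦ φ_{s,t}(w) − i·Im φ_{s,t}(1) converge to θ_s uniformly on compact subsets of ℍ as t → +∞. In case (ii), for every s ≥ 0 and w ∈ ℍ the limit lim_{t→+∞} Re φ_{s,t}(w) exists, is finite and positive, and equals Re θ_s(w). -/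
/-!
Along an evolution family the real parts `Re φ_{s,t}(w)` are nondecreasing in `t`, because the
Herglotz vector field has nonnegative real part. Harnack's inequality for holomorphic self-maps
of `ℍ`, together with the evolution property, shows that they tend to `+∞` either for all `(s, w)`
or for none; in the second case they converge. The Schwarz–Pick lemma in the form
`‖h p - i Im h(u)‖ (1 - ρ) ≤ Re h(u) (1 + ρ)`, with `ρ` the pseudo-hyperbolic distance of `p` and
`u`, applied to `h = φ_{t,t'} - id` (which has `Re h ≥ 0`) at `p = φ_{s,t}(w)`, `u = φ_{s,t}(1)`,
bounds the increments of `φ_{s,t} - i Im φ_{s,t}(1)` by the increments of `Re φ_{s,t}(1)`,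
locally uniformly in `w`. Hence these normalized maps are uniformly Cauchy on compacta.
-/

open Complex MeasureTheory Set Filter Topology

/-- The right half-plane `ℍ = {w : Re w > 0}`. -/
def RHP : Set ℂ := {w : ℂ | 0 < w.re}

/-- An evolution family in the right half-plane with common Denjoy-Wolff point `∞`,
together with its associated (Herglotz) vector field `F`. -/
structure EvolutionFamilyRHP where
  φ : ℝ → ℝ → ℂ → ℂ
  F : ℂ → ℝ → ℂ
  mapsTo : ∀ ⦃s t : ℝ⦄, 0 ≤ s → s ≤ t → Set.MapsTo (φ s t) RHP RHP
  holo : ∀ ⦃s t : ℝ⦄, 0 ≤ s → s ≤ t → DifferentiableOn ℂ (φ s t) RHP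
  id_eq : ∀ ⦃s : ℝ⦄, 0 ≤ s → ∀ w ∈ RHP, φ s s w = w
  comp : ∀ ⦃s u t : ℝ⦄, 0 ≤ s → s ≤ u → u ≤ t → ∀ w ∈ RHP,
    φ s t w = φ u t (φ s u w)
  F_meas : ∀ w ∈ RHP, Measurable (F w)
  F_holo : ∀ t : ℝ, 0 ≤ t → DifferentiableOn ℂ (fun w => F w t) RHP
  F_re_nonneg : ∀ w ∈ RHP, ∀ t : ℝ, 0 ≤ t → 0 ≤ (F w t).re
  F_bound : ∀ K : Set ℂ, K ⊆ RHP → IsCompact K → ∀ T : ℝ, 0 < T →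
    ∃ k : ℝ → ℝ, (∀ t, 0 ≤ k t) ∧ MeasureTheory.IntegrableOn k (Set.Icc 0 T) ∧
      ∀ w ∈ K, ∀ᵐ t ∂(MeasureTheory.volume.restrict (Set.Icc (0:ℝ) T)),
        ‖F w t‖ ≤ k t
  integral_eq : ∀ ⦃s t : ℝ⦄, 0 ≤ s → s ≤ t → ∀ w ∈ RHP,
    φ s t w = w + ∫ ξ in s..t, F (φ s ξ w) ξ

open Metric ComplexConjugate

lemma one_mem_RHP : (1 : ℂ) ∈ RHP := by simp [RHP]

lemma isOpen_RHP : IsOpen RHP := isOpen_lt continuous_const continuous_re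

lemma norm_add_conj_sq_sub_norm_sub_sq (v u : ℂ) :
    ‖v + conj u‖ ^ 2 - ‖v - u‖ ^ 2 = 4 * v.re * u.re := by
  simp only [Complex.sq_norm, normSq_apply, add_re, add_im, sub_re, sub_im, conj_re, conj_im]
  ring

lemma norm_sub_lt_norm_add_conj {v u : ℂ} (hv : v ∈ RHP) (hu : u ∈ RHP) :
    ‖v - u‖ < ‖v + conj u‖ := by
  have hpos : 0 < 4 * v.re * u.re := by have : 0 < v.re * u.re := mul_pos hv hu; linarith
  rw [← sq_lt_sq₀ (norm_nonneg _) (norm_nonneg _)]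
  linarith [norm_add_conj_sq_sub_norm_sub_sq v u]

lemma add_conj_ne_zero {v u : ℂ} (hv : v ∈ RHP) (hu : u ∈ RHP) : v + conj u ≠ 0 :=
  norm_pos_iff.1 ((norm_nonneg _).trans_lt (norm_sub_lt_norm_add_conj hv hu))

/-- `‖rhpToDisc a z‖` is the pseudo-hyperbolic distance between `z` and `a` in `ℍ`. -/
noncomputable def rhpToDisc (a z : ℂ) : ℂ := (z - a) / (z + conj a)

noncomputable def discToRHP (a ζ : ℂ) : ℂ := (a + conj a * ζ) / (1 - ζ)

section Mobius

variable {a z ζ : ℂ}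

lemma rhpToDisc_self : rhpToDisc a a = 0 := by simp [rhpToDisc]

lemma norm_rhpToDisc_lt_one (ha : a ∈ RHP) (hz : z ∈ RHP) : ‖rhpToDisc a z‖ < 1 := by
  rw [rhpToDisc, norm_div, div_lt_one ((norm_nonneg _).trans_lt (norm_sub_lt_norm_add_conj hz ha))]
  exact norm_sub_lt_norm_add_conj hz ha

lemma mapsTo_rhpToDisc (ha : a ∈ RHP) : MapsTo (rhpToDisc a) RHP (ball 0 1) := fun _ hz =>
  mem_ball_zero_iff.2 (norm_rhpToDisc_lt_one ha hz)

lemma differentiableOn_rhpToDisc (ha : a ∈ RHP) : DifferentiableOn ℂ (rhpToDisc a) RHP :=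
  (differentiableOn_id.sub_const a).div (differentiableOn_id.add_const _) fun _ hz =>
    add_conj_ne_zero hz ha

lemma one_sub_ne_zero_of_mem_ball (hζ : ζ ∈ ball (0 : ℂ) 1) : 1 - ζ ≠ 0 := by
  rw [sub_ne_zero]
  rintro rfl
  simp at hζ

lemma discToRHP_zero : discToRHP a 0 = a := by simp [discToRHP]

lemma mapsTo_discToRHP (ha : a ∈ RHP) : MapsTo (discToRHP a) (ball 0 1) RHP := by
  intro ζ hζ
  have hre : (discToRHP a ζ).re = (1 - normSq ζ) * a.re / normSq (1 - ζ) := by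
    simp only [discToRHP, div_re, normSq_apply, add_re, add_im, mul_re, mul_im, sub_re, sub_im,
      one_re, one_im, conj_re, conj_im]
    ring
  have hζ1 : normSq ζ < 1 := by
    rw [← Complex.sq_norm]
    nlinarith [norm_nonneg ζ, mem_ball_zero_iff.1 hζ]
  have hden : 0 < normSq (1 - ζ) := normSq_pos.2 (one_sub_ne_zero_of_mem_ball hζ)
  show 0 < (discToRHP a ζ).re
  rw [hre]
  exact div_pos (mul_pos (sub_pos.2 hζ1) ha) hden

lemma differentiableOn_discToRHP : DifferentiableOn ℂ (discToRHP a) (ball 0 1) :=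
  ((differentiableOn_id.const_mul _).const_add a).div (differentiableOn_id.const_sub 1)
    fun _ hζ => one_sub_ne_zero_of_mem_ball hζ

lemma discToRHP_rhpToDisc (ha : a ∈ RHP) (hz : z ∈ RHP) : discToRHP a (rhpToDisc a z) = z := by
  have hza : z + conj a ≠ 0 := add_conj_ne_zero hz ha
  have haa : a + conj a ≠ 0 := add_conj_ne_zero ha ha
  have hden : 1 - rhpToDisc a z = (a + conj a) / (z + conj a) := by
    rw [rhpToDisc]
    field_simp
    ring
  rw [discToRHP, hden, div_eq_iff (div_ne_zero haa hza), rhpToDisc]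
  field_simp
  ring

end Mobius

/-- The Schwarz–Pick lemma. -/
theorem norm_rhpToDisc_le_of_mapsTo {f : ℂ → ℂ} (hd : DifferentiableOn ℂ f RHP)
    (hm : MapsTo f RHP RHP) {z w : ℂ} (hz : z ∈ RHP) (hw : w ∈ RHP) :
    ‖rhpToDisc (f w) (f z)‖ ≤ ‖rhpToDisc w z‖ := by
  set g := rhpToDisc (f w) ∘ f ∘ discToRHP w
  have hg_maps : MapsTo g (ball 0 1) (ball 0 1) :=
    (mapsTo_rhpToDisc (hm hw)).comp (hm.comp (mapsTo_discToRHP hw))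
  have hg_diff : DifferentiableOn ℂ g (ball 0 1) :=
    (differentiableOn_rhpToDisc (hm hw)).comp
      (hd.comp differentiableOn_discToRHP (mapsTo_discToRHP hw)) (hm.comp (mapsTo_discToRHP hw))
  have hg_zero : g 0 = 0 := by simp [g, discToRHP_zero, rhpToDisc_self]
  have := norm_le_norm_of_mapsTo_ball hg_diff (hg_maps.mono_right ball_subset_closedBall) hg_zero
    (norm_rhpToDisc_lt_one hw hz)
  simpa [g, discToRHP_rhpToDisc hw hz] using this

lemma norm_mul_one_sub_le_of_norm_sub_le {v : ℂ} {a ρ : ℝ} (ha : 0 ≤ a) (hρ : 0 ≤ ρ)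
    (h : ‖v - a‖ ≤ ρ * ‖v + a‖) : ‖v‖ * (1 - ρ) ≤ a * (1 + ρ) := by
  have h₁ : ‖v‖ - a ≤ ‖v - a‖ := by simpa [abs_of_nonneg ha] using norm_sub_norm_le v a
  have h₂ : ‖v + a‖ ≤ ‖v‖ + a := by simpa [abs_of_nonneg ha] using norm_add_le v a
  nlinarith [mul_le_mul_of_nonneg_left h₂ hρ]

section SchwarzPickEstimates

variable {f : ℂ → ℂ} {p u : ℂ}

theorem norm_sub_im_mul_I_mul_le (hd : DifferentiableOn ℂ f RHP) (hm : MapsTo f RHP RHP)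
    (hp : p ∈ RHP) (hu : u ∈ RHP) :
    ‖f p - (f u).im * I‖ * (1 - ‖rhpToDisc u p‖) ≤ (f u).re * (1 + ‖rhpToDisc u p‖) := by
  refine norm_mul_one_sub_le_of_norm_sub_le (hm hu).le (norm_nonneg _) ?_
  have hpick := norm_rhpToDisc_le_of_mapsTo hd hm hp hu
  rw [rhpToDisc, norm_div, div_le_iff₀ (norm_pos_iff.2 (add_conj_ne_zero (hm hp) (hm hu)))]
    at hpick
  have hsub : f p - (f u).im * I - (f u).re = f p - f u := by
    linear_combination -(re_add_im (f u))
  have hadd : f p - (f u).im * I + (f u).re = f p + conj (f u) := by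
    apply Complex.ext <;> simp [sub_eq_add_neg]
  rwa [hsub, hadd]

theorem norm_sub_im_mul_I_mul_le_of_re_nonneg (hd : DifferentiableOn ℂ f RHP)
    (hre : ∀ z ∈ RHP, 0 ≤ (f z).re) (hp : p ∈ RHP) (hu : u ∈ RHP) :
    ‖f p - (f u).im * I‖ * (1 - ‖rhpToDisc u p‖) ≤ (f u).re * (1 + ‖rhpToDisc u p‖) := by
  set ρ := ‖rhpToDisc u p‖
  have hρ : ρ < 1 := norm_rhpToDisc_lt_one hu hp
  refine le_of_forall_pos_le_add fun ε hε => ?_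
  have hδ : MapsTo (fun z => f z + (ε / 2 : ℝ)) RHP RHP := fun z hz => by
    show 0 < (f z + (ε / 2 : ℝ)).re
    simp only [add_re, ofReal_re]
    linarith [hre z hz]
  have hshift := norm_sub_im_mul_I_mul_le (hd.add_const _) hδ hp hu
  simp only [add_re, add_im, ofReal_re, ofReal_im, add_zero] at hshift
  have htri : ‖f p - (f u).im * I‖ ≤ ‖f p + (ε / 2 : ℝ) - (f u).im * I‖ + ε / 2 :=
    calc ‖f p - (f u).im * I‖ = ‖f p + (ε / 2 : ℝ) - (f u).im * I - (ε / 2 : ℝ)‖ := by ring_nf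
      _ ≤ _ := by simpa [abs_of_pos hε] using norm_sub_le _ ((ε / 2 : ℝ) : ℂ)
  nlinarith

/-- Harnack's inequality. -/
theorem re_mul_one_sub_le_of_mapsTo (hd : DifferentiableOn ℂ f RHP) (hm : MapsTo f RHP RHP)
    (hp : p ∈ RHP) (hu : u ∈ RHP) :
    (f p).re * (1 - ‖rhpToDisc u p‖) ≤ (f u).re * (1 + ‖rhpToDisc u p‖) :=
  calc (f p).re * (1 - ‖rhpToDisc u p‖) ≤ ‖f p - (f u).im * I‖ * (1 - ‖rhpToDisc u p‖) := by
        refine mul_le_mul_of_nonneg_right ?_ (sub_nonneg.2 (norm_rhpToDisc_lt_one hu hp).le)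
        simpa using re_le_norm (f p - (f u).im * I)
    _ ≤ _ := norm_sub_im_mul_I_mul_le hd hm hp hu

end SchwarzPickEstimates

theorem uniformCauchySeqOn_of_dist_le {ι α β : Type*} [SemilatticeSup ι] [Nonempty ι]
    [PseudoMetricSpace β] {F : ι → α → β} {K : Set α} {e : ι → ℝ} (he : Tendsto e atTop (𝓝 0))
    (h : ∀ᶠ t in atTop, ∀ t', t ≤ t' → ∀ x ∈ K, dist (F t' x) (F t x) ≤ e t) :
    UniformCauchySeqOn F atTop K := by
  rw [Metric.uniformCauchySeqOn_iff]
  intro ε hε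
  obtain ⟨N, hN, hNε⟩ := (h.and (he.eventually (gt_mem_nhds (half_pos hε)))).exists
  refine ⟨N, fun m hm n hn x hx => ?_⟩
  calc dist (F m x) (F n x) ≤ dist (F m x) (F N x) + dist (F n x) (F N x) :=
        dist_triangle_right _ _ _
    _ ≤ e N + e N := add_le_add (hN m hm x hx) (hN n hn x hx)
    _ < ε := by linarith

namespace EvolutionFamilyRHP

variable (E : EvolutionFamilyRHP) {s t u : ℝ} {w : ℂ}

theorem re_le_re_apply (hs : 0 ≤ s) (hst : s ≤ t) (hw : w ∈ RHP) : w.re ≤ (E.φ s t w).re := by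
  rw [E.integral_eq hs hst w hw, add_re, le_add_iff_nonneg_right]
  by_cases hI : IntervalIntegrable (fun ξ => E.F (E.φ s ξ w) ξ) volume s t
  · have hre := intervalIntegral.intervalIntegral_re hI
    simp only [RCLike.re_to_complex] at hre
    rw [← hre]
    exact intervalIntegral.integral_nonneg hst fun ξ hξ =>
      E.F_re_nonneg _ (E.mapsTo hs hξ.1 hw) ξ (hs.trans hξ.1)
  · simp [intervalIntegral.integral_undef hI]

theorem re_apply_le_re_apply (hs : 0 ≤ s) (hsu : s ≤ u) (hut : u ≤ t) (hw : w ∈ RHP) :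
    (E.φ s u w).re ≤ (E.φ s t w).re := by
  rw [E.comp hs hsu hut w hw]
  exact E.re_le_re_apply (hs.trans hsu) hut (E.mapsTo hs hsu hw)

theorem tendsto_re_atTop_or_tendsto_nhds (hs : 0 ≤ s) (hw : w ∈ RHP) :
    Tendsto (fun t => (E.φ s t w).re) atTop atTop ∨
      ∃ L, Tendsto (fun t => (E.φ s t w).re) atTop (𝓝 L) := by
  have hmono : Monotone fun t => (E.φ s (max s t) w).re := fun t₁ t₂ h =>
    E.re_apply_le_re_apply hs (le_max_left s t₁) (max_le_max le_rfl h) hw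
  have heq : (fun t => (E.φ s (max s t) w).re) =ᶠ[atTop] fun t => (E.φ s t w).re :=
    (eventually_ge_atTop s).mono fun t ht => by simp only [max_eq_right ht]
  exact (tendsto_atTop_of_monotone hmono).imp (·.congr' heq) fun ⟨L, hL⟩ => ⟨L, hL.congr' heq⟩

theorem re_apply_le_of_tendsto (hs : 0 ≤ s) (hst : s ≤ t) (hw : w ∈ RHP) {L : ℝ}
    (hL : Tendsto (fun t => (E.φ s t w).re) atTop (𝓝 L)) : (E.φ s t w).re ≤ L :=
  ge_of_tendsto hL ((eventually_ge_atTop t).mono fun _ ht' => E.re_apply_le_re_apply hs hst ht' hw)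

theorem tendsto_re_atTop_of_tendsto_re_atTop_same_start (hs : 0 ≤ s) {v : ℂ} (hv : v ∈ RHP)
    (hw : w ∈ RHP) (h : Tendsto (fun t => (E.φ s t v).re) atTop atTop) :
    Tendsto (fun t => (E.φ s t w).re) atTop atTop := by
  set ρ := ‖rhpToDisc w v‖
  have hρ : ρ < 1 := norm_rhpToDisc_lt_one hw hv
  have hρ₀ : 0 ≤ ρ := norm_nonneg _
  have hc : 0 < (1 - ρ) / (1 + ρ) := div_pos (sub_pos.2 hρ) (by linarith)
  refine tendsto_atTop_mono' _ ?_ (h.atTop_mul_const hc)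
  filter_upwards [eventually_ge_atTop s] with t hst
  rw [← mul_div_assoc, div_le_iff₀ (by linarith)]
  exact re_mul_one_sub_le_of_mapsTo (E.holo hs hst) (E.mapsTo hs hst) hv hw

theorem tendsto_re_atTop_of_tendsto_re_atTop {s₀ : ℝ} {w₀ : ℂ} (hs₀ : 0 ≤ s₀) (hw₀ : w₀ ∈ RHP)
    (h : Tendsto (fun t => (E.φ s₀ t w₀).re) atTop atTop) (hs : 0 ≤ s) (hw : w ∈ RHP) :
    Tendsto (fun t => (E.φ s t w).re) atTop atTop := by
  rcases le_total s₀ s with hs₀s | hss₀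
  · refine E.tendsto_re_atTop_of_tendsto_re_atTop_same_start hs (E.mapsTo hs₀ hs₀s hw₀) hw
      (h.congr' ?_)
    filter_upwards [eventually_ge_atTop s] with t hst
    rw [E.comp hs₀ hs₀s hst w₀ hw₀]
  · refine (E.tendsto_re_atTop_of_tendsto_re_atTop_same_start hs₀ hw₀ (E.mapsTo hs hss₀ hw)
      h).congr' ?_
    filter_upwards [eventually_ge_atTop s₀] with t hs₀t
    rw [E.comp hs hss₀ hs₀t w hw]

def normalized (s t : ℝ) (w : ℂ) : ℂ := E.φ s t w - (E.φ s t 1).im * I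

theorem norm_normalized_sub_mul_le (hs : 0 ≤ s) (hst : s ≤ t) {t' : ℝ} (htt' : t ≤ t')
    (hw : w ∈ RHP) :
    ‖E.normalized s t' w - E.normalized s t w‖ * (1 - ‖rhpToDisc 1 w‖) ≤
      ((E.φ s t' 1).re - (E.φ s t 1).re) * (1 + ‖rhpToDisc 1 w‖) := by
  have ht : 0 ≤ t := hs.trans hst
  set p := E.φ s t w
  set v := E.φ s t 1
  have hp : p ∈ RHP := E.mapsTo hs hst hw
  have hv : v ∈ RHP := E.mapsTo hs hst one_mem_RHP
  have hd : DifferentiableOn ℂ (fun z => E.φ t t' z - z) RHP :=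
    (E.holo ht htt').sub differentiableOn_id
  have hre : ∀ z ∈ RHP, 0 ≤ (E.φ t t' z - z).re := fun z hz => by
    simpa [sub_re] using E.re_le_re_apply ht htt' hz
  have hincr := norm_sub_im_mul_I_mul_le_of_re_nonneg hd hre hp hv
  have hpick : ‖rhpToDisc v p‖ ≤ ‖rhpToDisc 1 w‖ := by
    simpa using norm_rhpToDisc_le_of_mapsTo (E.holo hs hst) (E.mapsTo hs hst) hw one_mem_RHP
  have heq : E.normalized s t' w - E.normalized s t w =
      (E.φ t t' p - p) - (E.φ t t' v - v).im * I := by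
    simp only [normalized, E.comp hs hst htt' w hw, E.comp hs hst htt' 1 one_mem_RHP, sub_im,
      ofReal_sub]
    ring
  have hR : (E.φ t t' v - v).re = (E.φ s t' 1).re - (E.φ s t 1).re := by
    rw [sub_re, E.comp hs hst htt' 1 one_mem_RHP]
  rw [heq, ← hR]
  set X := ‖E.φ t t' p - p - (E.φ t t' v - v).im * I‖
  calc X * (1 - ‖rhpToDisc 1 w‖) ≤ X * (1 - ‖rhpToDisc v p‖) := by gcongr
    _ ≤ (E.φ t t' v - v).re * (1 + ‖rhpToDisc v p‖) := hincr
    _ ≤ (E.φ t t' v - v).re * (1 + ‖rhpToDisc 1 w‖) := by gcongr; exact hre v hv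

theorem uniformCauchySeqOn_normalized (hs : 0 ≤ s) {L : ℝ}
    (hL : Tendsto (fun t => (E.φ s t 1).re) atTop (𝓝 L)) {K : Set ℂ} (hK : K ⊆ RHP)
    (hKc : IsCompact K) : UniformCauchySeqOn (E.normalized s) atTop K := by
  set q : ℂ → ℝ := fun w => (1 + ‖rhpToDisc 1 w‖) / (1 - ‖rhpToDisc 1 w‖)
  have hq : ContinuousOn q RHP := by
    have hρ := (differentiableOn_rhpToDisc one_mem_RHP).continuousOn.norm
    exact (continuousOn_const.add hρ).div (continuousOn_const.sub hρ) fun w hw =>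
      (sub_pos.2 (norm_rhpToDisc_lt_one one_mem_RHP hw)).ne'
  obtain ⟨C, hC⟩ := hKc.bddAbove_image (hq.mono hK)
  refine uniformCauchySeqOn_of_dist_le (e := fun t => (L - (E.φ s t 1).re) * C) ?_ ?_
  · have := ((tendsto_const_nhds (x := L)).sub hL).mul_const C
    rwa [sub_self, zero_mul] at this
  filter_upwards [eventually_ge_atTop s] with t hst t' htt' w hw
  have hincr := E.re_apply_le_re_apply hs hst htt' one_mem_RHP
  have hle := E.re_apply_le_of_tendsto hs (hst.trans htt') one_mem_RHP hL
  have hρ := norm_rhpToDisc_lt_one one_mem_RHP (hK hw)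
  have hq₀ : 0 ≤ q w := div_nonneg (by positivity) (by linarith)
  calc dist (E.normalized s t' w) (E.normalized s t w)
      ≤ ((E.φ s t' 1).re - (E.φ s t 1).re) * q w := by
        rw [dist_eq_norm, mul_div_assoc', le_div_iff₀ (by linarith)]
        exact E.norm_normalized_sub_mul_le hs hst htt' (hK hw)
    _ ≤ (L - (E.φ s t 1).re) * C :=
        mul_le_mul (by linarith) (hC (mem_image_of_mem q hw)) hq₀ (by linarith)

theorem exists_tendstoUniformlyOn_normalized (hs : 0 ≤ s) {L : ℝ}
    (hL : Tendsto (fun t => (E.φ s t 1).re) atTop (𝓝 L)) :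
    ∃ θ : ℂ → ℂ, DifferentiableOn ℂ θ RHP ∧ MapsTo θ RHP RHP ∧
      (∀ K ⊆ RHP, IsCompact K → TendstoUniformlyOn (E.normalized s) θ atTop K) ∧
      ∀ w ∈ RHP, Tendsto (fun t => (E.φ s t w).re) atTop (𝓝 (θ w).re) ∧ 0 < (θ w).re := by
  have hcauchy := fun K (hK : K ⊆ RHP) hKc => E.uniformCauchySeqOn_normalized hs hL hK hKc
  set θ : ℂ → ℂ := fun w => limUnder atTop fun t => E.normalized s t w
  have hθ : ∀ w ∈ RHP, Tendsto (fun t => E.normalized s t w) atTop (𝓝 (θ w)) := fun w hw =>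
    ((hcauchy {w} (singleton_subset_iff.2 hw) isCompact_singleton).cauchySeq rfl).tendsto_limUnder
  have hunif : ∀ K ⊆ RHP, IsCompact K → TendstoUniformlyOn (E.normalized s) θ atTop K :=
    fun K hK hKc => (hcauchy K hK hKc).tendstoUniformlyOn_of_tendsto fun w hw => hθ w (hK hw)
  have hre : ∀ w ∈ RHP, Tendsto (fun t => (E.φ s t w).re) atTop (𝓝 (θ w).re) := fun w hw => by
    simpa [normalized, Function.comp_def] using (continuous_re.tendsto _).comp (hθ w hw)
  have hpos : ∀ w ∈ RHP, 0 < (θ w).re := fun w hw =>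
    hw.trans_le <| ge_of_tendsto (hre w hw) <|
      (eventually_ge_atTop s).mono fun t ht => E.re_le_re_apply hs ht hw
  refine ⟨θ, ?_, hpos, hunif, fun w hw => ⟨hre w hw, hpos w hw⟩⟩
  exact ((tendstoLocallyUniformlyOn_iff_forall_isCompact isOpen_RHP).2 hunif).differentiableOn
    ((eventually_ge_atTop s).mono fun t ht => (E.holo hs ht).sub_const _) isOpen_RHP

end EvolutionFamilyRHP

/-- [Step II of the boundary Denjoy-Wolff theorem]  For an evolution family in `ℍ` with
common Denjoy-Wolff point `∞`, exactly one of the following holds: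
(i) `Re φ_{s,t}(w) → +∞` for all `w ∈ ℍ, s ≥ 0`; or
(ii) for every `s ≥ 0` there is a holomorphic `θ_s : ℍ → ℍ` with
`φ_{s,t} − i·Im φ_{s,t}(1) → θ_s` uniformly on compact subsets of `ℍ`, and in that case
for every `w ∈ ℍ` the limit `lim_{t→∞} Re φ_{s,t}(w)` exists, is finite and positive, and
equals `Re θ_s(w)`. -/
theorem evolutionFamilyRHP_dichotomy (E : EvolutionFamilyRHP) :
    Xor'
      (∀ w ∈ RHP, ∀ s : ℝ, 0 ≤ s →
        Tendsto (fun t => (E.φ s t w).re) atTop atTop)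
      (∀ s : ℝ, 0 ≤ s → ∃ θ : ℂ → ℂ,
        DifferentiableOn ℂ θ RHP ∧ Set.MapsTo θ RHP RHP ∧
        (∀ K : Set ℂ, K ⊆ RHP → IsCompact K →
          TendstoUniformlyOn
            (fun t w => E.φ s t w - ((E.φ s t 1).im : ℂ) * Complex.I) θ atTop K) ∧
        (∀ w ∈ RHP,
          Tendsto (fun t => (E.φ s t w).re) atTop (𝓝 ((θ w).re)) ∧ 0 < (θ w).re)) := by
  by_cases hA : ∀ w ∈ RHP, ∀ s : ℝ, 0 ≤ s → Tendsto (fun t => (E.φ s t w).re) atTop atTop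
  · refine .inl ⟨hA, fun hB => ?_⟩
    obtain ⟨θ, -, -, -, hlim⟩ := hB 0 le_rfl
    exact not_tendsto_atTop_of_tendsto_nhds (hlim 1 one_mem_RHP).1 (hA 1 one_mem_RHP 0 le_rfl)
  · refine .inr ⟨fun s hs => ?_, hA⟩
    have hfin : ¬ Tendsto (fun t => (E.φ s t 1).re) atTop atTop := fun h =>
      hA fun w hw _ hs' => E.tendsto_re_atTop_of_tendsto_re_atTop hs one_mem_RHP h hs' hw
    obtain ⟨L, hL⟩ := (E.tendsto_re_atTop_or_tendsto_nhds hs one_mem_RHP).resolve_left hfin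
    exact E.exists_tendstoUniformlyOn_normalized hs hL
end

section
/- Let (φ_{s,t}) be an evolution family in ℍ with common Denjoy–Wolff point ∞, with associated function F as in the context. If there exists w ∈ ℍ such that t ↦ F(w,t) is integrable on [0,+∞), i.e. ∫₀^∞ |F(w,t)| dt < +∞, then for every s ≥ 0 and every w' ∈ ℍ one has sup{ Re φ_{s,t}(w') : t ≥ s } < +∞ (in particular the family does not satisfy Re φ_{s,t}(w') → +∞). -/
/-!
Fix `w` with `F(w, ·) ∈ L¹`. Borel–Carathéodory on the disc of radius `Re w` about `w` gives
`‖F(z, t)‖ ≤ 3 ‖F(w, t)‖` for `‖z - w‖ ≤ Re w / 2`, so once the tail `∫_{s₀}^∞ ‖F(w, t)‖ dt` is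
below `Re w / 6`, a continuity argument keeps the orbit `φ_{s₀,t}(w)` in that disc for all
`t ≥ s₀`. By Schwarz–Pick, every other orbit `φ_{s₀,t}(z)` stays within a fixed
pseudo-hyperbolic distance `ρ < 1` of it, which bounds its real part by
`(1 + ρ) / (1 - ρ) · 3/2 · Re w`. Before time `s₀`, `Re φ_{s,t}(w')` is nondecreasing in `t`
because `Re F ≥ 0`.
-/

open Complex MeasureTheory Set Filter Topology

open ComplexConjugate Metric

namespace RHP

variable {z w : ℂ}

lemma re_add_conj_pos (hz : z ∈ RHP) (hw : w ∈ RHP) : 0 < (z + conj w).re := by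
  simpa using add_pos (show 0 < z.re from hz) (show 0 < w.re from hw)

lemma add_conj_ne_zero (hz : z ∈ RHP) (hw : w ∈ RHP) : z + conj w ≠ 0 := fun h => by
  simpa [h] using re_add_conj_pos hz hw

lemma norm_sub_lt_norm_add_conj (hz : z ∈ RHP) (hw : w ∈ RHP) : ‖z - w‖ < ‖z + conj w‖ := by
  have hz' : 0 < z.re := hz
  have hw' : 0 < w.re := hw
  rw [← sq_lt_sq₀ (norm_nonneg _) (norm_nonneg _), Complex.sq_norm, Complex.sq_norm, normSq_apply,
    normSq_apply]
  simp only [sub_re, sub_im, add_re, add_im, conj_re, conj_im]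
  nlinarith

/-- The Möbius map `ℍ → 𝔻` sending `w` to `0`; `‖cayley w z‖` is the pseudo-hyperbolic distance
between `z` and `w`. -/
noncomputable def cayley (w z : ℂ) : ℂ := (z - w) / (z + conj w)

noncomputable def cayleyInv (w ζ : ℂ) : ℂ := (w + ζ * conj w) / (1 - ζ)

lemma cayley_self (w : ℂ) : cayley w w = 0 := by simp [cayley]

lemma cayleyInv_zero (w : ℂ) : cayleyInv w 0 = w := by simp [cayleyInv]

lemma cayley_mem_ball (hz : z ∈ RHP) (hw : w ∈ RHP) : cayley w z ∈ ball (0 : ℂ) 1 := by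
  rw [mem_ball_zero_iff, cayley, norm_div, div_lt_one ((norm_pos_iff).2 (add_conj_ne_zero hz hw))]
  exact norm_sub_lt_norm_add_conj hz hw

lemma one_sub_ne_zero_of_mem_ball {ζ : ℂ} (hζ : ζ ∈ ball (0 : ℂ) 1) : 1 - ζ ≠ 0 := by
  rintro h
  rw [← sub_eq_zero.1 h] at hζ
  simp at hζ

lemma cayleyInv_mem (hw : w ∈ RHP) {ζ : ℂ} (hζ : ζ ∈ ball (0 : ℂ) 1) : cayleyInv w ζ ∈ RHP := by
  have hw' : 0 < w.re := hw
  have hζ' : normSq ζ < 1 := by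
    rw [← Complex.sq_norm, sq_lt_one_iff₀ (norm_nonneg _)]
    exact mem_ball_zero_iff.1 hζ
  have hnum : (w + ζ * conj w).re * (1 - ζ).re + (w + ζ * conj w).im * (1 - ζ).im
      = w.re * (1 - normSq ζ) := by
    simp only [add_re, add_im, mul_re, mul_im, sub_re, sub_im, one_re, one_im, conj_re, conj_im,
      normSq_apply]
    ring
  change 0 < (cayleyInv w ζ).re
  rw [cayleyInv, div_re, ← add_div, hnum]
  exact div_pos (mul_pos hw' (by linarith)) (normSq_pos.2 (one_sub_ne_zero_of_mem_ball hζ))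

lemma cayleyInv_cayley (hz : z ∈ RHP) (hw : w ∈ RHP) : cayleyInv w (cayley w z) = z := by
  have hzw := add_conj_ne_zero hz hw
  have h1 := one_sub_ne_zero_of_mem_ball (cayley_mem_ball hz hw)
  rw [cayley] at h1
  rw [cayley, cayleyInv, div_eq_iff h1]
  field_simp
  ring

lemma differentiableOn_cayley (hw : w ∈ RHP) : DifferentiableOn ℂ (cayley w) RHP :=
  (differentiableOn_id.sub_const w).div (differentiableOn_id.add_const _)
    fun _ hz => add_conj_ne_zero hz hw

lemma differentiableOn_cayleyInv (w : ℂ) : DifferentiableOn ℂ (cayleyInv w) (ball 0 1) :=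
  ((differentiableOn_const w).add (differentiableOn_id.mul_const _)).div
    ((differentiableOn_const 1).sub differentiableOn_id) fun _ => one_sub_ne_zero_of_mem_ball

theorem schwarz_pick {G : ℂ → ℂ} (hd : DifferentiableOn ℂ G RHP) (hG : MapsTo G RHP RHP)
    (hz : z ∈ RHP) (hw : w ∈ RHP) : ‖cayley (G w) (G z)‖ ≤ ‖cayley w z‖ := by
  have hInv : MapsTo (cayleyInv w) (ball 0 1) RHP := fun _ => cayleyInv_mem hw
  have key := Complex.norm_le_norm_of_mapsTo_ball
    (f := cayley (G w) ∘ G ∘ cayleyInv w)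
    ((differentiableOn_cayley (hG hw)).comp (hd.comp (differentiableOn_cayleyInv w) hInv)
      (hG.comp hInv))
    (fun ζ hζ => ball_subset_closedBall (cayley_mem_ball (hG (hInv hζ)) (hG hw)))
    (by simp [cayleyInv_zero, cayley_self]) (mem_ball_zero_iff.1 (cayley_mem_ball hz hw))
  simpa [cayleyInv_cayley hz hw] using key

theorem re_le_of_norm_cayley_le (hz : z ∈ RHP) (hw : w ∈ RHP) {ρ : ℝ} (hρ : ρ < 1)
    (h : ‖cayley w z‖ ≤ ρ) : z.re ≤ (1 + ρ) / (1 - ρ) * w.re := by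
  have hw' : 0 < w.re := hw
  have hpos : 0 < ‖z + conj w‖ := norm_pos_iff.2 (add_conj_ne_zero hz hw)
  rw [cayley, norm_div, div_le_iff₀ hpos] at h
  have hsplit : ‖z + conj w‖ ≤ ‖z - w‖ + 2 * w.re := calc
    ‖z + conj w‖ = ‖(z - w) + (w + conj w)‖ := by ring_nf
    _ ≤ ‖z - w‖ + ‖w + conj w‖ := norm_add_le _ _
    _ = ‖z - w‖ + 2 * w.re := by rw [add_conj]; simp [abs_of_pos hw']
  have hre : z.re - w.re ≤ ‖z - w‖ := by simpa using re_le_norm (z - w)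
  have hρ0 : 0 ≤ ρ := le_trans (by positivity) ((div_le_iff₀ hpos).2 h)
  rw [div_mul_eq_mul_div, le_div_iff₀ (by linarith)]
  nlinarith

theorem re_le_mul_re_of_mapsTo {G : ℂ → ℂ} (hd : DifferentiableOn ℂ G RHP)
    (hG : MapsTo G RHP RHP) (hz : z ∈ RHP) (hw : w ∈ RHP) :
    (G z).re ≤ (1 + ‖cayley w z‖) / (1 - ‖cayley w z‖) * (G w).re :=
  re_le_of_norm_cayley_le (hG hz) (hG hw) (mem_ball_zero_iff.1 (cayley_mem_ball hz hw))
    (schwarz_pick hd hG hz hw)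

end RHP

theorem Complex.norm_sub_le_of_re_nonneg_on_ball {f : ℂ → ℂ} {c z : ℂ} {R : ℝ}
    (hf : DifferentiableOn ℂ f (ball c R)) (hre : ∀ x ∈ ball c R, 0 ≤ (f x).re)
    (hz : z ∈ ball c R) :
    ‖f z - f c‖ ≤ 2 * (f c).re * ‖z - c‖ / (R - ‖z - c‖) := by
  have hR : 0 < R := pos_of_mem_ball hz
  have hc : 0 ≤ (f c).re := hre c (mem_ball_self hR)
  have hshift : MapsTo (c + ·) (ball 0 R) (ball c R) := fun ζ hζ => by
    simpa [mem_ball_iff_norm] using hζ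
  -- Borel–Carathéodory for `f c - f (c + ·)`, whose real part is `< (f c).re + ε`.
  have hε : ∀ ε > 0, ‖f z - f c‖ ≤ 2 * ((f c).re + ε) * ‖z - c‖ / (R - ‖z - c‖) := by
    intro ε hε
    have h := Complex.borelCaratheodory_zero (f := fun ζ => f c - f (c + ζ)) (z := z - c)
      (M := (f c).re + ε) (by linarith)
      ((hf.comp (differentiableOn_id.const_add c) hshift).const_sub _)
      (fun ζ hζ => by
        have := hre _ (hshift hζ)
        simp only [mem_ofPred_eq, sub_re]
        linarith)
      hR (mem_ball_zero_iff.2 (mem_ball_iff_norm.1 hz)) (by simp)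
    simpa [norm_sub_rev] using h
  have hlim : Tendsto (fun ε => 2 * ((f c).re + ε) * ‖z - c‖ / (R - ‖z - c‖)) (𝓝[>] 0)
      (𝓝 (2 * (f c).re * ‖z - c‖ / (R - ‖z - c‖))) := by
    refine tendsto_nhdsWithin_of_tendsto_nhds ?_
    have hcont : Continuous fun ε : ℝ => 2 * ((f c).re + ε) * ‖z - c‖ / (R - ‖z - c‖) := by
      fun_prop
    simpa using hcont.tendsto 0
  exact ge_of_tendsto hlim (eventually_nhdsWithin_of_forall hε)

namespace RHP

lemma ball_re_subset {w : ℂ} : ball w w.re ⊆ RHP := fun x hx => by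
  have h1 := neg_le_of_abs_le (abs_re_le_norm (x - w))
  rw [mem_ball_iff_norm] at hx
  rw [sub_re] at h1
  change 0 < x.re
  linarith

theorem norm_le_three_mul_of_re_nonneg {G : ℂ → ℂ} (hd : DifferentiableOn ℂ G RHP)
    (hre : ∀ z ∈ RHP, 0 ≤ (G z).re) {z w : ℂ} (hw : w ∈ RHP) (hz : ‖z - w‖ ≤ w.re / 2) :
    ‖G z‖ ≤ 3 * ‖G w‖ := by
  have hw' : 0 < w.re := hw
  have hzb : z ∈ ball w w.re := mem_ball_iff_norm.2 (by linarith)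
  have h := Complex.norm_sub_le_of_re_nonneg_on_ball (hd.mono ball_re_subset)
    (fun x hx => hre x (ball_re_subset hx)) hzb
  have hratio : ‖z - w‖ / (w.re - ‖z - w‖) ≤ 1 := by
    rw [div_le_one (by linarith)]; linarith
  calc ‖G z‖ ≤ ‖G z - G w‖ + ‖G w‖ := norm_le_norm_sub_add _ _
    _ ≤ 2 * (G w).re * (‖z - w‖ / (w.re - ‖z - w‖)) + ‖G w‖ := by
      rw [← mul_div_assoc]; gcongr
    _ ≤ 2 * ‖G w‖ * 1 + ‖G w‖ := by
      gcongr ?_ + _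
      exact mul_le_mul (by linarith [re_le_norm (G w)]) hratio
        (div_nonneg (norm_nonneg _) (by linarith)) (by positivity)
    _ = 3 * ‖G w‖ := by ring

end RHP

theorem ContinuousOn.forall_lt_of_bootstrap {u : ℝ → ℝ} {a b r : ℝ}
    (hu : ContinuousOn u (Icc a b))
    (hstep : ∀ c ∈ Icc a b, (∀ η ∈ Ico a c, u η < r) → u c < r) :
    ∀ η ∈ Icc a b, u η < r := by
  by_contra! hbad
  set Bad := Icc a b ∩ u ⁻¹' Ici r
  have hne : Bad.Nonempty := hbad
  have hclosed : IsClosed Bad := hu.preimage_isClosed_of_isClosed isClosed_Icc isClosed_Ici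
  -- The first exit time from `{u < r}` is a time at which `u < r` is forced.
  have hm : sInf Bad ∈ Bad := hclosed.csInf_mem hne ⟨a, fun _ hx => hx.1.1⟩
  refine not_lt.2 hm.2 (hstep _ hm.1 fun η hη => ?_)
  by_contra! hηr
  exact not_le.2 hη.2 (csInf_le ⟨a, fun _ hx => hx.1.1⟩ ⟨⟨hη.1, hη.2.le.trans hm.1.2⟩, hηr⟩)

lemma re_intervalIntegral_nonneg {f : ℝ → ℂ} {a b : ℝ} (hab : a ≤ b)
    (hf : ∀ x ∈ Icc a b, 0 ≤ (f x).re) : 0 ≤ (∫ x in a..b, f x).re := by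
  by_cases hint : IntervalIntegrable f volume a b
  · rw [intervalIntegral.integral_of_le hab, ← RCLike.re_to_complex, ← integral_re hint.1]
    exact setIntegral_nonneg_of_ae_restrict (ae_restrict_of_forall_mem measurableSet_Ioc
      fun x hx => hf x (Ioc_subset_Icc_self hx))
  · simp [intervalIntegral.integral_undef hint]

namespace EvolutionFamilyRHP

variable (E : EvolutionFamilyRHP)

theorem re_φ_mono {s u t : ℝ} (hs : 0 ≤ s) (hsu : s ≤ u) (hut : u ≤ t) {w : ℂ}
    (hw : w ∈ RHP) : (E.φ s u w).re ≤ (E.φ s t w).re := by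
  have hu : 0 ≤ u := hs.trans hsu
  have hv : E.φ s u w ∈ RHP := E.mapsTo hs hsu hw
  rw [E.comp hs hsu hut w hw, E.integral_eq hu hut _ hv, add_re, le_add_iff_nonneg_right]
  exact re_intervalIntegral_nonneg hut fun ξ hξ =>
    E.F_re_nonneg _ (E.mapsTo hu hξ.1 hv) ξ (hu.trans hξ.1)

theorem norm_φ_sub_lt {w : ℂ} (hw : w ∈ RHP) {s₀ r : ℝ} (hs₀ : 0 ≤ s₀) (hr : r ≤ w.re / 2)
    (hint : IntegrableOn (fun t => ‖E.F w t‖) (Ioi s₀))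
    (htail : 3 * ∫ t in Ioi s₀, ‖E.F w t‖ < r) {t : ℝ} (ht : s₀ ≤ t) :
    ‖E.φ s₀ t w - w‖ < r := by
  set f : ℝ → ℂ := fun ξ => E.F (E.φ s₀ ξ w) ξ
  have hφ : ∀ ξ ∈ Icc s₀ t, E.φ s₀ ξ w - w = ∫ η in s₀..ξ, f η := fun ξ hξ => by
    rw [E.integral_eq hs₀ hξ.1 w hw, add_sub_cancel_left]
  rw [hφ t ⟨ht, le_rfl⟩]
  by_cases hf : IntervalIntegrable f volume s₀ t
  swap
  · rw [intervalIntegral.integral_undef hf, norm_zero]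
    have : 0 ≤ ∫ t in Ioi s₀, ‖E.F w t‖ :=
      setIntegral_nonneg measurableSet_Ioi fun _ _ => norm_nonneg _
    linarith
  have hcont : ContinuousOn (fun ξ => ‖∫ η in s₀..ξ, f η‖) (Icc s₀ t) := by
    have := intervalIntegral.continuousOn_primitive_interval' hf left_mem_uIcc
    rw [uIcc_of_le ht] at this
    exact continuous_norm.comp_continuousOn this
  refine hcont.forall_lt_of_bootstrap (fun c hc hprev => ?_) t ⟨ht, le_rfl⟩
  -- Before time `c` the orbit stays in the disc where `‖F(·, η)‖ ≤ 3 ‖F(w, η)‖`.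
  have hbound : ∀ η ∈ Ico s₀ c, ‖f η‖ ≤ 3 * ‖E.F w η‖ := fun η hη =>
    RHP.norm_le_three_mul_of_re_nonneg (E.F_holo η (hs₀.trans hη.1))
      (fun z hz => E.F_re_nonneg z hz η (hs₀.trans hη.1)) hw
      (by rw [hφ η ⟨hη.1, hη.2.le.trans hc.2⟩]; exact (hprev η hη).le.trans hr)
  have hgc : IntegrableOn (fun η => ‖E.F w η‖) (Ioc s₀ c) := hint.mono_set Ioc_subset_Ioi_self
  calc ‖∫ η in s₀..c, f η‖ ≤ ∫ η in s₀..c, 3 * ‖E.F w η‖ := by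
        refine intervalIntegral.norm_integral_le_of_norm_le hc.1 ?_
          ((intervalIntegrable_iff_integrableOn_Ioc_of_le hc.1).2 (hgc.const_mul 3))
        filter_upwards [Measure.ae_ne volume c] with η hne hη
        exact hbound η ⟨hη.1.le, lt_of_le_of_ne hη.2 hne⟩
    _ ≤ 3 * ∫ η in Ioi s₀, ‖E.F w η‖ := by
        rw [intervalIntegral.integral_const_mul, intervalIntegral.integral_of_le hc.1]
        exact mul_le_mul_of_nonneg_left (setIntegral_mono_set hint
          (.of_forall fun _ => norm_nonneg _) Ioc_subset_Ioi_self.eventuallyLE) zero_le_three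
    _ < r := htail

theorem re_φ_le {w z : ℂ} (hw : w ∈ RHP) (hz : z ∈ RHP) {s₀ t : ℝ} (hs₀ : 0 ≤ s₀)
    (hint : IntegrableOn (fun t => ‖E.F w t‖) (Ioi s₀))
    (htail : 3 * ∫ t in Ioi s₀, ‖E.F w t‖ < w.re / 2) (ht : s₀ ≤ t) :
    (E.φ s₀ t z).re ≤ (1 + ‖RHP.cayley w z‖) / (1 - ‖RHP.cayley w z‖) * (3 / 2 * w.re) := by
  have hnear := E.norm_φ_sub_lt hw hs₀ le_rfl hint htail ht
  have hρ : ‖RHP.cayley w z‖ < 1 := mem_ball_zero_iff.1 (RHP.cayley_mem_ball hz hw)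
  have hρ₀ : 0 ≤ (1 + ‖RHP.cayley w z‖) / (1 - ‖RHP.cayley w z‖) :=
    div_nonneg (by positivity) (by linarith)
  calc (E.φ s₀ t z).re
      ≤ (1 + ‖RHP.cayley w z‖) / (1 - ‖RHP.cayley w z‖) * (E.φ s₀ t w).re :=
        RHP.re_le_mul_re_of_mapsTo (E.holo hs₀ ht) (E.mapsTo hs₀ ht) hz hw
    _ ≤ (1 + ‖RHP.cayley w z‖) / (1 - ‖RHP.cayley w z‖) * (3 / 2 * w.re) := by
        gcongr
        linarith [re_le_norm (E.φ s₀ t w - w), sub_re (E.φ s₀ t w) w]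

end EvolutionFamilyRHP

/-- If the associated Herglotz vector field `F` of an evolution family in `ℍ` with common
Denjoy-Wolff point `∞` satisfies `F(w,·) ∈ L¹([0,∞))` for some `w ∈ ℍ`, then all the orbits
have bounded real part: `sup_{t ≥ s} Re φ_{s,t}(w') < ∞` for every `s ≥ 0` and `w' ∈ ℍ`;
in particular no orbit satisfies `Re φ_{s,t}(w') → +∞`. -/
theorem evolutionFamilyRHP_bounded_of_integrable (E : EvolutionFamilyRHP)
    (h : ∃ w ∈ RHP, MeasureTheory.IntegrableOn (fun t => E.F w t) (Set.Ici (0:ℝ))) :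
    ∀ s : ℝ, 0 ≤ s → ∀ w' ∈ RHP,
      (∃ M : ℝ, ∀ t : ℝ, s ≤ t → (E.φ s t w').re ≤ M) ∧
      ¬ Tendsto (fun t => (E.φ s t w').re) atTop atTop := by
  obtain ⟨w, hw, hFw⟩ := h
  intro s hs w' hw'
  have hw₀ : 0 < w.re := hw
  have hsmall : ∀ᶠ s₀ in atTop, ∫ t in Ioi s₀, ‖E.F w t‖ < w.re / 6 :=
    (tendsto_integral_Ioi_zero tendsto_id).eventually (gt_mem_nhds (by positivity))
  obtain ⟨s₀, htail, hss₀⟩ := (hsmall.and (eventually_ge_atTop s)).exists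
  have hs₀ : 0 ≤ s₀ := hs.trans hss₀
  have hint : IntegrableOn (fun t => ‖E.F w t‖) (Ioi s₀) :=
    IntegrableOn.mono_set hFw.norm fun _ ht => hs₀.trans ht.le
  set w'' := E.φ s s₀ w'
  have hw'' : w'' ∈ RHP := E.mapsTo hs hss₀ hw'
  obtain ⟨M, hM⟩ : ∃ M, ∀ t, s ≤ t → (E.φ s t w').re ≤ M := by
    refine ⟨max w''.re ((1 + ‖RHP.cayley w w''‖) / (1 - ‖RHP.cayley w w''‖) * (3 / 2 * w.re)),
      fun t hst => ?_⟩
    rcases le_total t s₀ with hts₀ | hs₀t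
    · exact (E.re_φ_mono hs hst hts₀ hw').trans (le_max_left _ _)
    · rw [E.comp hs hss₀ hs₀t w' hw']
      exact (E.re_φ_le hw hw'' hs₀ hint (by linarith) hs₀t).trans (le_max_right _ _)
  exact ⟨⟨M, hM⟩, fun htop =>
    not_isBoundedUnder_of_tendsto_atTop htop ⟨M, (eventually_ge_atTop s).mono hM⟩⟩
end

section
/- Let (ψ_{s,t}) be an evolution family in 𝔻 with common Denjoy–Wolff point 0, with associated generalized Herglotz function p, and set λ(t) := ∫₀^t p(0,ξ) dξ. Assume that L := lim_{t→+∞} Re λ(t) < +∞. Then for each z ∈ 𝔻 with z ≠ 0 and each s ≥ 0 there exists a real constant c = c(s,z) such that ω_A = exp(i·c)·ω_λ, where: ω_A is the set of all u ∈ ℂ such that ψ_{s,t_n}(z)/|ψ_{s,t_n}(z)| → u for some sequence t_n → +∞ (note ψ_{s,t}(z) ≠ 0 for z ≠ 0); ω_λ is the set of all v ∈ ℂ such that exp(−i·Im λ(t_n)) → v for some sequence t_n → +∞; and exp(i·c)·ω_λ := { exp(i·c)·v : v ∈ ω_λ }. -/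
/-!
Write `w(t) = φ s t z` and `λ(t) = ∫₀ᵗ p(0, ξ) dξ`. The trajectory solves the linear equation
`w' = -p(w, t) w`, so `w(t) = z exp (-∫ₛᵗ p(w(ξ), ξ) dξ)`, and `|w(t)| ≤ |z|` since `Re p ≥ 0`.
On the disk of radius `|z|` the Schwarz lemma gives the Herglotz estimate
`|p(w, t) - p(0, t)| ≤ 2|z|/(1 - |z|) Re p(0, t)`, and `Re p(0, ·)` is integrable on `(0, ∞)`
because `Re λ` converges. Hence `w(t) e^{λ(t)} = z exp (λ(s) - ∫ₛᵗ (p(w(ξ), ξ) - p(0, ξ)) dξ)`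
tends to some `h ≠ 0`, and `w/|w| = (w e^λ / |w e^λ|) e^{-i Im λ}` where the first factor tends
to `e^{i arg h}`.
-/

open Complex MeasureTheory Set Filter Topology

/-- The open unit disk `𝔻`. -/
def UD : Set ℂ := {z : ℂ | ‖z‖ < 1}

/-- An evolution family in the unit disk with common Denjoy-Wolff point `0`, i.e. a
solution family of the radial Loewner-type equation `dz/dt = −z·p(z,t)` with `p` a
generalized Herglotz function. -/
structure EvolutionFamilyDisk0 where
  φ : ℝ → ℝ → ℂ → ℂ
  p : ℂ → ℝ → ℂ
  mapsTo : ∀ ⦃s t : ℝ⦄, 0 ≤ s → s ≤ t → Set.MapsTo (φ s t) UD UD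
  holo : ∀ ⦃s t : ℝ⦄, 0 ≤ s → s ≤ t → DifferentiableOn ℂ (φ s t) UD
  id_eq : ∀ ⦃s : ℝ⦄, 0 ≤ s → ∀ z ∈ UD, φ s s z = z
  comp : ∀ ⦃s u t : ℝ⦄, 0 ≤ s → s ≤ u → u ≤ t → ∀ z ∈ UD,
    φ s t z = φ u t (φ s u z)
  p_meas : ∀ z ∈ UD, Measurable (p z)
  p_holo : ∀ t : ℝ, 0 ≤ t → DifferentiableOn ℂ (fun z => p z t) UD
  p_re_nonneg : ∀ z ∈ UD, ∀ t : ℝ, 0 ≤ t → 0 ≤ (p z t).re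
  G_bound : ∀ K : Set ℂ, K ⊆ UD → IsCompact K → ∀ T : ℝ, 0 < T →
    ∃ k : ℝ → ℝ, (∀ t, 0 ≤ k t) ∧ MeasureTheory.IntegrableOn k (Set.Icc 0 T) ∧
      ∀ z ∈ K, ∀ᵐ t ∂(MeasureTheory.volume.restrict (Set.Icc (0:ℝ) T)),
        ‖z * p z t‖ ≤ k t
  integral_eq : ∀ ⦃s t : ℝ⦄, 0 ≤ s → s ≤ t → ∀ z ∈ UD,
    φ s t z = z - ∫ ξ in s..t, φ s ξ z * p (φ s ξ z) ξ

/-- The family is non-trivial if some `φ_{s,t}`, `s < t`, is not the identity of `𝔻`. -/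
def EvolutionFamilyDisk0.Nontrivial (E : EvolutionFamilyDisk0) : Prop :=
  ∃ s t : ℝ, 0 ≤ s ∧ s < t ∧ ∃ z ∈ UD, E.φ s t z ≠ z

/-- The ω-limit (in `ℂ`) of the trajectory `t ↦ ψ_{s,t}(z)`. -/
def omegaLimitDisk0 (E : EvolutionFamilyDisk0) (s : ℝ) (z : ℂ) : Set ℂ :=
  {q : ℂ | ∃ tn : ℕ → ℝ, Tendsto tn atTop atTop ∧
    Tendsto (fun n => E.φ s (tn n) z) atTop (𝓝 q)}

open scoped ComplexConjugate NNReal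

lemma UD_eq_ball : UD = Metric.ball (0 : ℂ) 1 := by
  ext z; simp [UD]

lemma zero_mem_UD : (0 : ℂ) ∈ UD := by simp [UD]

def IsHerglotz (f : ℂ → ℂ) : Prop :=
  DifferentiableOn ℂ f UD ∧ ∀ u ∈ UD, 0 ≤ (f u).re

lemma normSq_add_conj_sub_normSq_sub (A B : ℂ) :
    normSq (A + conj B) - normSq (A - B) = 4 * A.re * B.re := by
  simp only [normSq_apply, add_re, add_im, sub_re, sub_im, conj_re, conj_im]
  ring

/-- Schwarz's lemma for `(g - g 0) / (g + conj (g 0))`, which maps `𝔻` into itself since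
`‖A + conj B‖² - ‖A - B‖² = 4 Re A Re B`. -/
theorem norm_sub_le_mul_norm_add_conj_of_re_pos {g : ℂ → ℂ} (hg : DifferentiableOn ℂ g UD)
    (hre : ∀ u ∈ UD, 0 < (g u).re) {w : ℂ} (hw : w ∈ UD) :
    ‖g w - g 0‖ ≤ ‖w‖ * ‖g w + conj (g 0)‖ := by
  have hre0 := hre 0 zero_mem_UD
  have hd_pos : ∀ u ∈ UD, 0 < ‖g u + conj (g 0)‖ := fun u hu =>
    norm_pos_iff.2 fun h => by
      have := congrArg re h
      simp only [add_re, conj_re, zero_re] at this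
      linarith [hre u hu]
  have hmaps : MapsTo (fun u => (g u - g 0) / (g u + conj (g 0))) (Metric.ball 0 1)
      (Metric.closedBall 0 1) := by
    intro u hu
    rw [← UD_eq_ball] at hu
    rw [mem_closedBall_zero_iff, norm_div, div_le_one (hd_pos u hu),
      ← sq_le_sq₀ (norm_nonneg _) (norm_nonneg _), ← normSq_eq_norm_sq, ← normSq_eq_norm_sq]
    nlinarith [normSq_add_conj_sub_normSq_sub (g u) (g 0), mul_pos (hre u hu) hre0]
  have hdiff : DifferentiableOn ℂ (fun u => (g u - g 0) / (g u + conj (g 0)))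
      (Metric.ball 0 1) := by
    rw [← UD_eq_ball]
    exact (hg.sub_const _).div (hg.add_const _) fun u hu => norm_pos_iff.1 (hd_pos u hu)
  have hS := Complex.norm_le_norm_of_mapsTo_ball hdiff hmaps (by simp) hw
  rwa [norm_div, div_le_iff₀ (hd_pos w hw)] at hS

namespace IsHerglotz

variable {f : ℂ → ℂ} {w : ℂ}

/-- Apply `norm_sub_le_mul_norm_add_conj_of_re_pos` to `f + ε` and let `ε → 0`. -/
theorem norm_sub_le_mul_norm_add_conj (hf : IsHerglotz f) (hw : w ∈ UD) :
    ‖f w - f 0‖ ≤ ‖w‖ * ‖f w + conj (f 0)‖ := by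
  have hshift : ∀ ε : ℝ, 0 < ε → ‖f w - f 0‖ ≤ ‖w‖ * ‖f w + conj (f 0) + 2 * ε‖ := by
    intro ε hε
    have h := norm_sub_le_mul_norm_add_conj_of_re_pos (g := fun u => f u + ε)
      (hf.1.add_const _) (fun u hu => by simpa using add_pos_of_nonneg_of_pos (hf.2 u hu) hε) hw
    rw [add_sub_add_right_eq_sub, map_add, conj_ofReal] at h
    convert h using 3
    ring
  have hlim : Tendsto (fun ε : ℝ => ‖w‖ * ‖f w + conj (f 0) + 2 * ε‖) (𝓝[>] 0)
      (𝓝 (‖w‖ * ‖f w + conj (f 0)‖)) := by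
    apply tendsto_nhdsWithin_of_tendsto_nhds
    have : Continuous (fun ε : ℝ => ‖w‖ * ‖f w + conj (f 0) + 2 * ε‖) := by fun_prop
    simpa using this.tendsto 0
  exact ge_of_tendsto hlim (eventually_nhdsWithin_of_forall hshift)

theorem norm_sub_apply_zero_le (hf : IsHerglotz f) {r : ℝ} (hwr : ‖w‖ ≤ r) (hr : r < 1) :
    ‖f w - f 0‖ ≤ 2 * r / (1 - r) * (f 0).re := by
  have hw : w ∈ UD := lt_of_le_of_lt hwr hr
  have h := hf.norm_sub_le_mul_norm_add_conj hw
  have hsplit : f w + conj (f 0) = (f w - f 0) + (2 * (f 0).re : ℝ) := by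
    apply Complex.ext <;> simp <;> ring
  have htri : ‖f w + conj (f 0)‖ ≤ ‖f w - f 0‖ + 2 * (f 0).re := by
    rw [hsplit]
    refine (norm_add_le _ _).trans ?_
    rw [norm_real, Real.norm_of_nonneg (by linarith [hf.2 0 zero_mem_UD])]
  rw [div_mul_eq_mul_div, le_div_iff₀ (by linarith)]
  nlinarith [norm_nonneg w, norm_nonneg (f w - f 0), hf.2 0 zero_mem_UD]

theorem norm_apply_le (hf : IsHerglotz f) {r : ℝ} (hwr : ‖w‖ ≤ r) (hr : r < 1) :
    ‖f w‖ ≤ (1 + r) / (1 - r) * ‖f 0‖ := by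
  have hsub := hf.norm_sub_apply_zero_le hwr hr
  have hr0 : 0 ≤ r := (norm_nonneg w).trans hwr
  have htri : ‖f w‖ ≤ ‖f 0‖ + ‖f w - f 0‖ := by simpa using norm_add_le (f 0) (f w - f 0)
  have hre : 2 * r / (1 - r) * (f 0).re ≤ 2 * r / (1 - r) * ‖f 0‖ :=
    mul_le_mul_of_nonneg_left (re_le_norm _) (div_nonneg (by linarith) (by linarith))
  have hconst : (1 + r) / (1 - r) = 1 + 2 * r / (1 - r) := by
    field_simp [show (1 - r) ≠ 0 by linarith]; ring
  rw [hconst]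
  linarith

theorem harnack (hf : IsHerglotz f) (hw : w ∈ UD) :
    (1 - ‖w‖) * (f 0).re ≤ (1 + ‖w‖) * (f w).re := by
  have h := hf.norm_sub_le_mul_norm_add_conj hw
  have hw1 : ‖w‖ < 1 := hw
  set x := (f w).re
  set u := (f 0).re
  set y := (f w).im - (f 0).im
  have hx : 0 ≤ x := hf.2 w hw
  have hu : 0 ≤ u := hf.2 0 zero_mem_UD
  have hsq : (x - u) ^ 2 + y ^ 2 ≤ ‖w‖ ^ 2 * ((x + u) ^ 2 + y ^ 2) := by
    have e1 : ‖f w - f 0‖ ^ 2 = (x - u) ^ 2 + y ^ 2 := by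
      rw [← normSq_eq_norm_sq, normSq_apply]
      simp only [sub_re, sub_im, x, u, y]
      ring
    have e2 : ‖f w + conj (f 0)‖ ^ 2 = (x + u) ^ 2 + y ^ 2 := by
      rw [← normSq_eq_norm_sq, normSq_apply]
      simp only [add_re, add_im, conj_re, conj_im, x, u, y]
      ring
    rw [← e1, ← e2, ← mul_pow]
    exact pow_le_pow_left₀ (norm_nonneg _) h 2
  have hsq' : (u - x) ^ 2 ≤ (‖w‖ * (x + u)) ^ 2 := by
    have hw2 : ‖w‖ ^ 2 ≤ 1 := by nlinarith [norm_nonneg w]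
    nlinarith [mul_nonneg (sub_nonneg.2 hw2) (sq_nonneg y)]
  have := (abs_le_of_sq_le_sq' hsq' (by positivity)).2
  nlinarith

end IsHerglotz

namespace AbsolutelyContinuousOnInterval

theorem congr {X : Type*} [PseudoMetricSpace X] {f g : ℝ → X} {a b : ℝ}
    (hf : AbsolutelyContinuousOnInterval f a b) (hfg : EqOn f g (uIcc a b)) :
    AbsolutelyContinuousOnInterval g a b := by
  refine hf.congr' ?_
  rw [EventuallyEq, eventually_inf_principal]
  refine Eventually.of_forall fun E hE => Finset.sum_congr rfl fun i hi => ?_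
  rw [hfg (hE.1 i hi).1, hfg (hE.1 i hi).2]

theorem of_re_im {F : ℝ → ℂ} {a b : ℝ}
    (hre : AbsolutelyContinuousOnInterval (fun x => (F x).re) a b)
    (him : AbsolutelyContinuousOnInterval (fun x => (F x).im) a b) :
    AbsolutelyContinuousOnInterval F a b := by
  refine squeeze_zero (fun _ => Finset.sum_nonneg fun _ _ => dist_nonneg) (fun E => ?_)
    (by simpa using Tendsto.add hre him)
  rw [← Finset.sum_add_distrib]
  gcongr with i
  rw [dist_eq, Real.dist_eq, Real.dist_eq]
  simpa using Complex.norm_le_abs_re_add_abs_im (F (E.2 i).1 - F (E.2 i).2)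

end AbsolutelyContinuousOnInterval

theorem LipschitzOnWith.comp_absolutelyContinuousOnInterval {X Y : Type*} [PseudoMetricSpace X]
    [PseudoMetricSpace Y] {g : X → Y} {K : ℝ≥0} {s : Set X} {f : ℝ → X} {a b : ℝ}
    (hg : LipschitzOnWith K g s) (hf : AbsolutelyContinuousOnInterval f a b)
    (hfs : MapsTo f (uIcc a b) s) :
    AbsolutelyContinuousOnInterval (g ∘ f) a b := by
  refine squeeze_zero' (Eventually.of_forall fun _ => Finset.sum_nonneg fun _ _ => dist_nonneg)
    ?_ (by simpa using Tendsto.const_mul (K : ℝ) hf)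
  rw [eventually_inf_principal]
  refine Eventually.of_forall fun E hE => ?_
  rw [Finset.mul_sum]
  gcongr with i hi
  exact hg.dist_le_mul _ (hfs (hE.1 i hi).1) _ (hfs (hE.1 i hi).2)

theorem IntervalIntegrable.absolutelyContinuousOnInterval_intervalIntegral_complex
    {f : ℝ → ℂ} {a b c : ℝ} (h : IntervalIntegrable f volume a b) (hc : c ∈ uIcc a b) :
    AbsolutelyContinuousOnInterval (fun x => ∫ v in c..x, f v) a b := by
  have hsub : ∀ x ∈ uIcc a b, IntervalIntegrable f volume c x := fun x hx =>
    h.mono_set (uIcc_subset_uIcc hc hx)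
  apply AbsolutelyContinuousOnInterval.of_re_im
  · have hre : IntervalIntegrable (fun x => (f x).re) volume a b :=
      ⟨Integrable.re h.1, Integrable.re h.2⟩
    refine (hre.absolutelyContinuousOnInterval_intervalIntegral hc).congr fun x hx => ?_
    exact intervalIntegral.intervalIntegral_re (hsub x hx)
  · have him : IntervalIntegrable (fun x => (f x).im) volume a b :=
      ⟨Integrable.im h.1, Integrable.im h.2⟩
    refine (him.absolutelyContinuousOnInterval_intervalIntegral hc).congr fun x hx => ?_
    exact intervalIntegral.intervalIntegral_im (hsub x hx)

/-- The solution of the linear equation `w' = -q w`, `w a = z`, written in integral form with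
`f = q w`, is `z * exp (-∫ q)`: `w * exp (∫ q)` is absolutely continuous with derivative `0` a.e. -/
theorem sub_intervalIntegral_eq_mul_exp_neg {f q : ℝ → ℂ} {a b : ℝ} (z : ℂ)
    (hf : IntervalIntegrable f volume a b) (hq : IntervalIntegrable q volume a b)
    (hfq : ∀ᵐ x, x ∈ uIcc a b → f x = (z - ∫ ξ in a..x, f ξ) * q x) :
    z - ∫ ξ in a..b, f ξ = z * exp (-∫ ξ in a..b, q ξ) := by
  set W : ℝ → ℂ := fun x => z - ∫ ξ in a..x, f ξ
  set Λ : ℝ → ℂ := fun x => ∫ ξ in a..x, q ξ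
  have hW : AbsolutelyContinuousOnInterval W a b :=
    ((LipschitzWith.const z).lipschitzOnWith.absolutelyContinuousOnInterval).fun_sub
      (hf.absolutelyContinuousOnInterval_intervalIntegral_complex left_mem_uIcc)
  have hΛ : AbsolutelyContinuousOnInterval Λ a b :=
    hq.absolutelyContinuousOnInterval_intervalIntegral_complex left_mem_uIcc
  have hexpΛ : AbsolutelyContinuousOnInterval (exp ∘ Λ) a b := by
    obtain ⟨C, hC⟩ := hΛ.exists_bound
    obtain ⟨K, hK⟩ := (Complex.contDiff_exp (𝕜 := ℝ) (n := 1)).contDiffOn.exists_lipschitzOnWith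
      one_ne_zero (convex_closedBall (0 : ℂ) C) (isCompact_closedBall 0 C)
    exact hK.comp_absolutelyContinuousOnInterval hΛ fun x hx => mem_closedBall_zero_iff.2 (hC x hx)
  have hderiv : ∀ᵐ x, x ∈ uIcc a b → HasDerivAt (fun x => W x * exp (Λ x)) 0 x := by
    filter_upwards [hf.ae_hasDerivAt_integral, hq.ae_hasDerivAt_integral, hfq]
      with x hWx hΛx hfqx hx
    have h : HasDerivAt (fun x => W x * exp (Λ x))
        (-f x * exp (Λ x) + W x * (exp (Λ x) * q x)) x :=
      ((hWx hx a left_mem_uIcc).const_sub z).mul (hΛx hx a left_mem_uIcc).cexp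
    rw [hfqx hx] at h
    convert h using 1
    ring
  obtain ⟨C, hC⟩ := (hW.fun_smul hexpΛ).const_of_ae_hasDerivAt_zero hderiv
  have hb : W b * exp (Λ b) = z := by
    have ha : W a * exp (Λ a) = z := by simp [W, Λ]
    rw [← ha]
    exact (hC b right_mem_uIcc).trans (hC a left_mem_uIcc).symm
  rw [exp_neg, eq_mul_inv_iff_mul_eq₀ (exp_ne_zero _)]
  exact hb

section Measurability

variable {β : Type*} [TopologicalSpace β] [TopologicalSpace.PseudoMetrizableSpace β]
  {μ : Measure ℝ} {f : ℝ → β} {s τ : ℝ}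

theorem aestronglyMeasurable_Ioi_of_forall_Ioc
    (hf : ∀ T, AEStronglyMeasurable f (μ.restrict (Ioc s T))) :
    AEStronglyMeasurable f (μ.restrict (Ioi s)) := by
  have hcover : Ioi s ⊆ ⋃ n : ℕ, Ioc s (s + n) := fun x hx =>
    mem_iUnion.2 ⟨⌈x - s⌉₊, hx, by linarith [Nat.le_ceil (x - s)]⟩
  exact (aestronglyMeasurable_iUnion_iff.2 fun n => hf _).mono_set hcover

theorem aestronglyMeasurable_Ioi_of_forall_lt_of_Ioi [NullSingletonClass μ]
    (hlt : ∀ t < τ, AEStronglyMeasurable f (μ.restrict (Ioc s t)))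
    (hgt : AEStronglyMeasurable f (μ.restrict (Ioi τ))) :
    AEStronglyMeasurable f (μ.restrict (Ioi s)) := by
  have hcover : Ioi s ⊆ (⋃ n : ℕ, Ioc s (τ - 1 / (n + 1))) ∪ {τ} ∪ Ioi τ := by
    intro x hx
    rcases lt_trichotomy x τ with h | h | h
    · obtain ⟨n, hn⟩ := exists_nat_one_div_lt (sub_pos.2 h)
      exact Or.inl (Or.inl (mem_iUnion.2 ⟨n, hx, by linarith⟩))
    · exact Or.inl (Or.inr h)
    · exact Or.inr h
  refine AEStronglyMeasurable.mono_set hcover ?_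
  rw [aestronglyMeasurable_union_iff, aestronglyMeasurable_union_iff,
    aestronglyMeasurable_iUnion_iff]
  refine ⟨⟨fun n => hlt _ ?_, by simp [Measure.restrict_singleton]⟩, hgt⟩
  have : (0 : ℝ) < 1 / (n + 1) := by positivity
  linarith

end Measurability

namespace EvolutionFamilyDisk0

variable (E : EvolutionFamilyDisk0)

lemma isHerglotz_p {t : ℝ} (ht : 0 ≤ t) : IsHerglotz (fun u => E.p u t) :=
  ⟨E.p_holo t ht, fun u hu => E.p_re_nonneg u hu t ht⟩

/-- By the Herglotz estimates `‖p(0,t)‖ ≤ 7 ‖p(1/2,t)‖`, and `p(1/2,·)` is dominated by the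
integrable bound `G_bound`. -/
lemma integrableOn_p_zero (T : ℝ) : IntegrableOn (E.p 0) (Icc 0 T) := by
  have half_mem : (1 / 2 : ℂ) ∈ UD := by norm_num [UD]
  obtain ⟨k, -, hk, hbound⟩ := E.G_bound {1 / 2} (singleton_subset_iff.2 half_mem)
    isCompact_singleton (max T 1) (by positivity)
  refine IntegrableOn.mono_set ?_ (Icc_subset_Icc_right (le_max_left T 1))
  refine Integrable.mono' (hk.const_mul 14) (E.p_meas 0 zero_mem_UD).aestronglyMeasurable ?_
  filter_upwards [hbound (1 / 2) rfl, ae_restrict_mem measurableSet_Icc] with t hkt ht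
  have hp := E.isHerglotz_p ht.1
  have hhalf : ‖(1 / 2 : ℂ)‖ = 1 / 2 := by norm_num
  have hsub := hp.norm_sub_apply_zero_le hhalf.le (by norm_num)
  have hharnack := hp.harnack half_mem
  rw [hhalf] at hharnack
  rw [norm_mul, hhalf] at hkt
  have htri : ‖E.p 0 t‖ ≤ ‖E.p (1 / 2) t‖ + ‖E.p (1 / 2) t - E.p 0 t‖ := by
    simpa using norm_sub_le (E.p (1 / 2) t) (E.p (1 / 2) t - E.p 0 t)
  have hre := re_le_norm (E.p (1 / 2) t)
  norm_num at hsub hharnack ⊢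
  linarith

lemma intervalIntegrable_p_zero {a b : ℝ} (ha : 0 ≤ a) (hb : 0 ≤ b) :
    IntervalIntegrable (E.p 0) volume a b :=
  ((E.integrableOn_p_zero (max a b)).mono_set
    (uIcc_subset_Icc ⟨ha, le_max_left a b⟩ ⟨hb, le_max_right a b⟩)).intervalIntegrable

lemma aestronglyMeasurable_p_comp {w : ℝ → ℂ} (hw : Continuous w) (hwUD : ∀ ξ, w ξ ∈ UD) :
    AEStronglyMeasurable (fun ξ => E.p (w ξ) ξ) (volume.restrict (Ici 0)) := by
  -- a Carathéodory function on `𝔻 × ℝ`: `p(·, t)` is only known to be continuous for `t ≥ 0`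
  let u : UD → ℝ → ℂ := fun b t => if 0 ≤ t then E.p b t else 0
  have hu : Measurable (Function.uncurry u) := by
    refine measurable_uncurry_of_continuous_of_measurable (fun t => ?_) (fun b => ?_)
    · by_cases ht : 0 ≤ t
      · simp only [u, if_pos ht]
        exact (E.p_holo t ht).continuousOn.comp_continuous continuous_subtype_val Subtype.property
      · simp only [u, if_neg ht]
        exact continuous_const
    · exact Measurable.ite measurableSet_Ici (E.p_meas b b.2) measurable_const
  have hcomp : Measurable fun ξ => u ⟨w ξ, hwUD ξ⟩ ξ :=
    hu.comp ((hw.subtype_mk hwUD).measurable.prodMk measurable_id)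
  refine hcomp.aestronglyMeasurable.congr ?_
  filter_upwards [ae_restrict_mem measurableSet_Ici] with ξ hξ
  simp only [u, if_pos (show (0 : ℝ) ≤ ξ from hξ)]

def pAlong (s : ℝ) (z : ℂ) (ξ : ℝ) : ℂ := E.p (E.φ s ξ z) ξ

variable {E} {s t T : ℝ} {z : ℂ}

/-- Without integrability the integral in `integral_eq` takes the junk value `0`. -/
lemma φ_eq_self_of_not_integrableOn (hs : 0 ≤ s) (hz : z ∈ UD) (ht : s ≤ t)
    (hg : ¬IntegrableOn (fun ξ => E.φ s ξ z * E.pAlong s z ξ) (Ioc s t)) : E.φ s t z = z := by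
  rw [E.integral_eq hs ht z hz, intervalIntegral.integral_undef, sub_zero]
  rwa [intervalIntegrable_iff_integrableOn_Ioc_of_le ht]

lemma continuousOn_φ_of_integrableOn (hs : 0 ≤ s) (hz : z ∈ UD) (hsT : s ≤ T)
    (hg : IntegrableOn (fun ξ => E.φ s ξ z * E.pAlong s z ξ) (Ioc s T)) :
    ContinuousOn (fun t => E.φ s t z) (Icc s T) := by
  have hprim := intervalIntegral.continuousOn_primitive_interval (μ := volume)
    (f := fun ξ => E.φ s ξ z * E.pAlong s z ξ)
    (by rwa [uIcc_of_le hsT, integrableOn_Icc_iff_integrableOn_Ioc])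
  rw [uIcc_of_le hsT] at hprim
  exact (continuousOn_const.sub hprim).congr fun t ht => E.integral_eq hs ht.1 z hz

/-- On `[s, T]` the trajectory stays in a compact subset of `𝔻`, where `p(·, t)` is dominated by
`‖p(0, t)‖`. -/
lemma integrableOn_pAlong_of_integrableOn (hs : 0 ≤ s) (hz : z ∈ UD) (hsT : s ≤ T)
    (hg : IntegrableOn (fun ξ => E.φ s ξ z * E.pAlong s z ξ) (Ioc s T)) :
    IntegrableOn (E.pAlong s z) (Ioc s T) := by
  have hwc := E.continuousOn_φ_of_integrableOn hs hz hsT hg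
  obtain ⟨ξ₀, hξ₀, hmax⟩ := isCompact_Icc.exists_isMaxOn (nonempty_Icc.2 hsT) hwc.norm
  have hr : ‖E.φ s ξ₀ z‖ < 1 := E.mapsTo hs hξ₀.1 hz
  set wb : ℝ → ℂ := fun ξ => E.φ s (projIcc s T hsT ξ) z
  have hwb : Continuous wb := hwc.comp_continuous
    (continuous_subtype_val.comp continuous_projIcc) fun ξ => (projIcc s T hsT ξ).2
  have hwbUD : ∀ ξ, wb ξ ∈ UD := fun ξ => E.mapsTo hs (projIcc s T hsT ξ).2.1 hz
  have hsub : Ioc s T ⊆ Icc 0 T := fun ξ hξ => ⟨hs.trans hξ.1.le, hξ.2⟩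
  refine Integrable.mono' (((E.integrableOn_p_zero T).mono_set hsub).norm.const_mul
    ((1 + ‖E.φ s ξ₀ z‖) / (1 - ‖E.φ s ξ₀ z‖)))
    (((E.aestronglyMeasurable_p_comp hwb hwbUD).mono_set
      (hsub.trans Icc_subset_Ici_self)).congr ?_) ?_
  · filter_upwards [ae_restrict_mem measurableSet_Ioc] with ξ hξ
    simp only [wb, pAlong, projIcc_of_mem hsT (Ioc_subset_Icc_self hξ)]
  · filter_upwards [ae_restrict_mem measurableSet_Ioc] with ξ hξ
    exact (E.isHerglotz_p (hs.trans hξ.1.le)).norm_apply_le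
      (hmax (Ioc_subset_Icc_self hξ)) hr

lemma φ_eq_mul_exp_of_integrableOn (hs : 0 ≤ s) (hz : z ∈ UD) (hsT : s ≤ T)
    (hg : IntegrableOn (fun ξ => E.φ s ξ z * E.pAlong s z ξ) (Ioc s T)) :
    E.φ s T z = z * exp (-∫ ξ in s..T, E.pAlong s z ξ) := by
  rw [E.integral_eq hs hsT z hz]
  refine sub_intervalIntegral_eq_mul_exp_neg z
    ((intervalIntegrable_iff_integrableOn_Ioc_of_le hsT).2 hg)
    ((intervalIntegrable_iff_integrableOn_Ioc_of_le hsT).2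
      (E.integrableOn_pAlong_of_integrableOn hs hz hsT hg)) (Eventually.of_forall fun x hx => ?_)
  rw [uIcc_of_le hsT] at hx
  rw [← E.integral_eq hs hx.1 z hz]
  rfl

lemma norm_φ_le (hs : 0 ≤ s) (hz : z ∈ UD) (ht : s ≤ t) : ‖E.φ s t z‖ ≤ ‖z‖ := by
  by_cases hg : IntegrableOn (fun ξ => E.φ s ξ z * E.pAlong s z ξ) (Ioc s t)
  · have hq := (intervalIntegrable_iff_integrableOn_Ioc_of_le ht).2
      (E.integrableOn_pAlong_of_integrableOn hs hz ht hg)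
    have hre : 0 ≤ (∫ ξ in s..t, E.pAlong s z ξ).re := by
      rw [← RCLike.re_to_complex, ← intervalIntegral.intervalIntegral_re hq]
      exact intervalIntegral.integral_nonneg ht fun u hu =>
        E.p_re_nonneg _ (E.mapsTo hs hu.1 hz) u (hs.trans hu.1)
    rw [E.φ_eq_mul_exp_of_integrableOn hs hz ht hg, norm_mul, norm_exp, neg_re]
    exact mul_le_of_le_one_right (norm_nonneg z) (Real.exp_le_one_iff.2 (by linarith))
  · rw [E.φ_eq_self_of_not_integrableOn hs hz ht hg]

/-- Past the supremum `Tb` of the times up to which the integrand is integrable, the trajectory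
is constant by `φ_eq_self_of_not_integrableOn`; so the integrand is a.e.-measurable, and it is
dominated by a multiple of `‖p(0, ·)‖` since the trajectory stays in the disk of radius `‖z‖`. -/
theorem integrableOn_φ_mul_pAlong (hs : 0 ≤ s) (hz : z ∈ UD) (T : ℝ) :
    IntegrableOn (fun ξ => E.φ s ξ z * E.pAlong s z ξ) (Ioc s T) := by
  set G := {T | IntegrableOn (fun ξ => E.φ s ξ z * E.pAlong s z ξ) (Ioc s T)}
  have hmono : ∀ {T T'}, T ≤ T' → T' ∈ G → T ∈ G := fun h hT' =>
    IntegrableOn.mono_set hT' (Ioc_subset_Ioc_right h)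
  by_contra hT
  have hsG : s ∈ G := by simp [G]
  have hbdd : BddAbove G := ⟨T, fun T' hT' => not_lt.1 fun hlt => hT (hmono hlt.le hT')⟩
  set Tb := sSup G
  have hbelow : ∀ t < Tb, t ∈ G := fun t ht =>
    let ⟨_, hT', htT'⟩ := exists_lt_of_lt_csSup ⟨s, hsG⟩ ht
    hmono htT'.le hT'
  have habove : ∀ t, Tb < t → E.φ s t z = z := fun t ht =>
    E.φ_eq_self_of_not_integrableOn hs hz ((le_csSup hbdd hsG).trans ht.le)
      fun h => (le_csSup hbdd h).not_gt ht
  have hmeas : AEStronglyMeasurable (fun ξ => E.φ s ξ z * E.pAlong s z ξ)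
      (volume.restrict (Ioc s T)) := by
    refine (aestronglyMeasurable_Ioi_of_forall_lt_of_Ioi (τ := Tb)
      (fun t ht => (hbelow t ht).aestronglyMeasurable) ?_).mono_set Ioc_subset_Ioi_self
    refine (((E.p_meas z hz).const_mul z).aestronglyMeasurable).congr ?_
    filter_upwards [ae_restrict_mem measurableSet_Ioi] with ξ hξ
    simp only [pAlong, habove ξ hξ]
  have hz1 : ‖z‖ < 1 := hz
  refine hT (Integrable.mono' (((E.integrableOn_p_zero T).mono_set fun ξ hξ =>
    ⟨hs.trans hξ.1.le, hξ.2⟩).norm.const_mul ((1 + ‖z‖) / (1 - ‖z‖))) hmeas ?_)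
  filter_upwards [ae_restrict_mem measurableSet_Ioc] with ξ hξ
  have hwξ := E.norm_φ_le hs hz hξ.1.le
  rw [norm_mul]
  calc ‖E.φ s ξ z‖ * ‖E.pAlong s z ξ‖ ≤ 1 * ‖E.pAlong s z ξ‖ := by
        gcongr; linarith
    _ ≤ (1 + ‖z‖) / (1 - ‖z‖) * ‖E.p 0 ξ‖ := by
        rw [one_mul]; exact (E.isHerglotz_p (hs.trans hξ.1.le)).norm_apply_le hwξ hz1

lemma integrableOn_Ioi_re_p_zero
    (hL : ∃ L : ℝ, Tendsto (fun t : ℝ => (∫ ξ in (0:ℝ)..t, E.p 0 ξ).re) atTop (𝓝 L)) :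
    IntegrableOn (fun ξ => (E.p 0 ξ).re) (Ioi 0) := by
  obtain ⟨L, hL⟩ := hL
  refine integrableOn_Ioi_of_intervalIntegral_norm_tendsto L 0
    (fun T => Integrable.re ((E.integrableOn_p_zero T).mono_set Ioc_subset_Icc_self))
    tendsto_id (hL.congr' ?_)
  filter_upwards [eventually_ge_atTop 0] with t ht
  rw [← RCLike.re_to_complex,
    ← intervalIntegral.intervalIntegral_re (E.intervalIntegrable_p_zero le_rfl ht)]
  refine intervalIntegral.integral_congr fun ξ hξ => ?_
  rw [uIcc_of_le ht] at hξ
  exact (Real.norm_of_nonneg (E.p_re_nonneg 0 zero_mem_UD ξ hξ.1)).symm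

/-- Along the trajectory `‖p(φ s t z, t) - p(0, t)‖ ≤ c Re p(0, t)`, which is integrable on
`(0, ∞)`, so `∫ₛᵗ (p(φ s ξ z, ξ) - p(0, ξ)) dξ` converges. -/
theorem exists_tendsto_φ_mul_exp (hs : 0 ≤ s) (hz : z ∈ UD) (hz0 : z ≠ 0)
    (hL : ∃ L : ℝ, Tendsto (fun t : ℝ => (∫ ξ in (0:ℝ)..t, E.p 0 ξ).re) atTop (𝓝 L)) :
    ∃ h ≠ 0, Tendsto (fun t => E.φ s t z * exp (∫ ξ in (0:ℝ)..t, E.p 0 ξ)) atTop (𝓝 h) := by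
  have hz1 : ‖z‖ < 1 := hz
  have hq : ∀ T, IntegrableOn (E.pAlong s z) (Ioc s T) := fun T => by
    rcases le_total s T with hsT | hTs
    · exact E.integrableOn_pAlong_of_integrableOn hs hz hsT (E.integrableOn_φ_mul_pAlong hs hz T)
    · simp [Ioc_eq_empty_of_le hTs]
  have hp0 : ∀ T, IntegrableOn (E.p 0) (Ioc s T) := fun T =>
    (E.integrableOn_p_zero T).mono_set fun ξ hξ => ⟨hs.trans hξ.1.le, hξ.2⟩
  have hdiff : IntegrableOn (fun ξ => E.pAlong s z ξ - E.p 0 ξ) (Ioi s) := by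
    refine Integrable.mono' (((E.integrableOn_Ioi_re_p_zero hL).mono_set
      (Ioi_subset_Ioi hs)).const_mul (2 * ‖z‖ / (1 - ‖z‖)))
      (aestronglyMeasurable_Ioi_of_forall_Ioc fun T => ((hq T).sub (hp0 T)).aestronglyMeasurable) ?_
    filter_upwards [ae_restrict_mem measurableSet_Ioi] with ξ hξ
    exact (E.isHerglotz_p (hs.trans hξ.le)).norm_sub_apply_zero_le
      (E.norm_φ_le hs hz hξ.le) hz1
  have hrenorm : ∀ t, s ≤ t → E.φ s t z * exp (∫ ξ in (0:ℝ)..t, E.p 0 ξ) =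
      z * exp ((∫ ξ in (0:ℝ)..s, E.p 0 ξ) - ∫ ξ in s..t, (E.pAlong s z ξ - E.p 0 ξ)) := by
    intro t ht
    have hqt := (intervalIntegrable_iff_integrableOn_Ioc_of_le ht).2 (hq t)
    have hp0t := (intervalIntegrable_iff_integrableOn_Ioc_of_le ht).2 (hp0 t)
    rw [E.φ_eq_mul_exp_of_integrableOn hs hz ht (E.integrableOn_φ_mul_pAlong hs hz t),
      mul_assoc, ← exp_add, intervalIntegral.integral_sub hqt hp0t,
      ← intervalIntegral.integral_add_adjacent_intervals (E.intervalIntegrable_p_zero le_rfl hs)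
        hp0t]
    congr 2
    ring
  have hD := intervalIntegral_tendsto_integral_Ioi s hdiff tendsto_id
  refine ⟨z * exp ((∫ ξ in (0:ℝ)..s, E.p 0 ξ) - ∫ ξ in Ioi s, (E.pAlong s z ξ - E.p 0 ξ)),
    mul_ne_zero hz0 (exp_ne_zero _), ?_⟩
  refine (((continuous_exp.tendsto _).comp (tendsto_const_nhds.sub hD)).const_mul z).congr' ?_
  filter_upwards [eventually_ge_atTop s] with t ht
  exact (hrenorm t ht).symm

end EvolutionFamilyDisk0

def omegaLimitAtTop {X : Type*} [TopologicalSpace X] (a : ℝ → X) : Set X :=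
  {x | ∃ tn : ℕ → ℝ, Tendsto tn atTop atTop ∧ Tendsto (fun n => a (tn n)) atTop (𝓝 x)}

theorem omegaLimitAtTop_eq_image_mul {K : Type*} [DivisionRing K] [TopologicalSpace K]
    [IsTopologicalDivisionRing K] [T1Space K] {a b Φ : ℝ → K} {u : K}
    (hΦ : Tendsto Φ atTop (𝓝 u)) (hu : u ≠ 0) (hab : ∀ t, a t = Φ t * b t) :
    omegaLimitAtTop a = (u * ·) '' omegaLimitAtTop b := by
  ext x
  constructor
  · rintro ⟨tn, htn, hx⟩
    have hΦn := hΦ.comp htn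
    refine ⟨u⁻¹ * x, ⟨tn, htn, ((hΦn.inv₀ hu).mul hx).congr' ?_⟩, mul_inv_cancel_left₀ hu x⟩
    filter_upwards [hΦn.eventually_ne hu] with n hn
    rw [Function.comp_apply] at hn ⊢
    rw [hab, inv_mul_cancel_left₀ hn]
  · rintro ⟨y, ⟨tn, htn, hy⟩, rfl⟩
    exact ⟨tn, htn, by simpa only [hab, Function.comp_apply] using (hΦ.comp htn).mul hy⟩

lemma div_norm_eq_mul_exp_div_norm_mul_exp (a l : ℂ) :
    a / ‖a‖ = a * exp l / ‖a * exp l‖ * exp (-I * l.im) := by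
  have hl : exp l * exp (-I * l.im) = Real.exp l.re := by
    rw [← exp_add, ofReal_exp]
    congr 1
    apply Complex.ext <;> simp
  have he : (Real.exp l.re : ℂ) ≠ 0 := ofReal_ne_zero.2 (Real.exp_pos _).ne'
  rw [norm_mul, norm_exp, ofReal_mul, div_mul_eq_mul_div, mul_assoc, hl, mul_div_mul_right _ _ he]

/-- For an evolution family in `𝔻` with common Denjoy-Wolff point `0` and spectral
function `λ(t) = ∫₀^t p(0,ξ)dξ` with `L = lim Re λ(t) < +∞`: for each `z ≠ 0` in `𝔻` and
each `s ≥ 0` there is a real constant `c(s,z)` with `ω_A = e^{ic}·ω_λ`, where `ω_A` is the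
ω-limit of `t ↦ ψ_{s,t}(z)/|ψ_{s,t}(z)|` and `ω_λ` is the ω-limit of
`t ↦ exp(−i·Im λ(t))`. -/
theorem argument_omega_limit_rotation (E : EvolutionFamilyDisk0)
    (hL : ∃ L : ℝ, Tendsto
      (fun t : ℝ => (∫ ξ in (0:ℝ)..t, E.p 0 ξ).re) atTop (𝓝 L)) :
    ∀ z ∈ UD, z ≠ 0 → ∀ s : ℝ, 0 ≤ s → ∃ c : ℝ,
      {u : ℂ | ∃ tn : ℕ → ℝ, Tendsto tn atTop atTop ∧
        Tendsto (fun n =>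
          E.φ s (tn n) z / ((‖E.φ s (tn n) z‖ : ℝ) : ℂ))
          atTop (𝓝 u)} =
      (fun v : ℂ => Complex.exp (Complex.I * (c : ℂ)) * v) ''
        {v : ℂ | ∃ tn : ℕ → ℝ, Tendsto tn atTop atTop ∧
          Tendsto (fun n => Complex.exp
            (-(Complex.I) * (((∫ ξ in (0:ℝ)..(tn n), E.p 0 ξ).im : ℝ) : ℂ)))
            atTop (𝓝 v)} := by
  intro z hz hz0 s hs
  obtain ⟨h, hh, hlim⟩ := E.exists_tendsto_φ_mul_exp hs hz hz0 hL
  have hu : h / ‖h‖ = exp (I * arg h) := by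
    rw [div_eq_iff (ofReal_ne_zero.2 (norm_ne_zero_iff.2 hh)), mul_comm I, mul_comm,
      norm_mul_exp_arg_mul_I]
  refine ⟨arg h, omegaLimitAtTop_eq_image_mul (a := fun t => E.φ s t z / ‖E.φ s t z‖)
    (b := fun t => exp (-I * (∫ ξ in (0:ℝ)..t, E.p 0 ξ).im)) ?_ (exp_ne_zero _)
    fun t => div_norm_eq_mul_exp_div_norm_mul_exp _ _⟩
  rw [← hu]
  exact hlim.div ((continuous_ofReal.tendsto _).comp hlim.norm)
    (ofReal_ne_zero.2 (norm_ne_zero_iff.2 hh))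
end
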